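/- Let X = Π_{i=1}^n [aᵢ, bᵢ] ⊂ ℝⁿ, F : ℝⁿ → ℝⁿ of class C¹, x₀ ∈ X, and let [DF(X)] be an invertible interval enclosure of the derivative as in the interval Newton method. If N(x₀, X) = x₀ − [DF(X)]⁻¹ F(x₀) satisfies N(x₀, X) ∩ X = ∅, then F(x) ≠ 0 for all x ∈ X. -/
import Mathlib


/-- interval Newton–Moore method, nonexistence part.
Let `X = Π [aᵢ, bᵢ]` be a compact box in `ℝⁿ`, `F : ℝⁿ → ℝⁿ` of class `C¹`, `x₀ ∈ X`,
and `D = [DF(X)]` an enclosure of the derivative: a set of invertible matrices such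
that for all `x, y ∈ X` there is `A ∈ D` with `F y − F x = A (y − x)`.  If
`N(x₀, X) = {x₀ − A⁻¹ F x₀ : A ∈ D}` is disjoint from `X`, then `F` has no zero
in `X`. -/
theorem interval_newton_nonexistence
    {n : ℕ} (a b : Fin n → ℝ)
    (X : Set (Fin n → ℝ)) (hX : X = Set.univ.pi fun i => Set.Icc (a i) (b i))
    (F : (Fin n → ℝ) → (Fin n → ℝ)) (hF : ContDiff ℝ 1 F)
    (x₀ : Fin n → ℝ) (hx₀ : x₀ ∈ X)
    (D : Set (Matrix (Fin n) (Fin n) ℝ))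
    (hmean : ∀ x ∈ X, ∀ y ∈ X, ∃ A ∈ D, F y - F x = A.mulVec (y - x))
    (hinv : ∀ A ∈ D, IsUnit A)
    (NX : Set (Fin n → ℝ))
    (hNX : NX = {z | ∃ A ∈ D, z = x₀ - A⁻¹.mulVec (F x₀)})
    (hdisj : NX ∩ X = ∅) :
    ∀ x ∈ X, F x ≠ 0 := by
  intro x hx hFx
  obtain ⟨A, hA, hEq⟩ := hmean x hx x₀ hx₀
  have hdet : IsUnit A.det := (Matrix.isUnit_iff_isUnit_det A).mp (hinv A hA)
  have hFx₀ : F x₀ = A.mulVec (x₀ - x) := by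
    have := hEq
    rw [hFx, sub_zero] at this
    exact this
  have hxNX : x ∈ NX := by
    rw [hNX]
    refine ⟨A, hA, ?_⟩
    rw [hFx₀, Matrix.mulVec_mulVec, Matrix.nonsing_inv_mul A hdet, Matrix.one_mulVec]
    abel
  have : x ∈ NX ∩ X := ⟨hxNX, hx⟩
  rw [hdisj] at this
  exact this
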